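/- Let x_1, …, x_N ∈ ℝ^d with N ≥ 1, β > 0, and c ∈ ℝ. Define the Hopfield energy E : ℝ^d → ℝ by E(ξ) = ½·⟨ξ, ξ⟩ − β⁻¹·log(∑_{i=1}^N exp(β·⟨x_i, ξ⟩)) + c. Then E is differentiable, its gradient at ξ is ∇E(ξ) = ξ − ∑_{i=1}^N softmax(β·Xᵀξ)_i · x_i, and consequently one gradient-descent step with step size η = 1 yields the Hopfield update rule: ξ − ∇E(ξ) = ∑_{i=1}^N softmax(β·Xᵀξ)_i · x_i. -/

import Mathlib

/-!
The Riesz isomorphism `toDual` is ℝ-linear, so the sum, scalar and chain rules for Fréchet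
derivatives transfer verbatim to gradients. With them, `½⟨ξ, ξ⟩` has gradient `ξ`, and the chain
rule for `log` and `exp` shows that log-sum-exp has gradient the softmax-weighted average of the
gradients of its arguments; the normalising sum is positive because there is at least one pattern.
Scaling the log-sum-exp term by `β⁻¹` cancels the factor `β` coming from `β⟨xᵢ, ξ⟩`.
-/

open scoped RealInnerProductSpace

open Real

variable {ι F : Type*} [NormedAddCommGroup F] [InnerProductSpace ℝ F] [CompleteSpace F]

section GradientCalculus

variable {f g : F → ℝ} {f' g' x : F}

theorem HasGradientAt.sub (hf : HasGradientAt f f' x) (hg : HasGradientAt g g' x) :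
    HasGradientAt (fun y => f y - g y) (f' - g') x := by
  rw [hasGradientAt_iff_hasFDerivAt, map_sub]
  exact hf.hasFDerivAt.sub hg.hasFDerivAt

theorem HasGradientAt.add_const (hf : HasGradientAt f f' x) (c : ℝ) :
    HasGradientAt (fun y => f y + c) f' x :=
  hf.hasFDerivAt.add_const c

theorem HasGradientAt.const_mul (hf : HasGradientAt f f' x) (c : ℝ) :
    HasGradientAt (fun y => c * f y) (c • f') x := by
  rw [hasGradientAt_iff_hasFDerivAt, map_smulₛₗ, RCLike.conj_to_real]
  exact hf.hasFDerivAt.const_mul c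

theorem HasGradientAt.fun_sum {u : Finset ι} {f : ι → F → ℝ} {f' : ι → F}
    (hf : ∀ i ∈ u, HasGradientAt (f i) (f' i) x) :
    HasGradientAt (fun y => ∑ i ∈ u, f i y) (∑ i ∈ u, f' i) x := by
  rw [hasGradientAt_iff_hasFDerivAt, map_sum]
  exact HasFDerivAt.fun_sum fun i hi => (hf i hi).hasFDerivAt

theorem HasDerivAt.comp_hasGradientAt {h : ℝ → ℝ} {h' : ℝ} (hh : HasDerivAt h h' (f x))
    (hf : HasGradientAt f f' x) : HasGradientAt (fun y => h (f y)) (h' • f') x := by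
  rw [hasGradientAt_iff_hasFDerivAt, map_smulₛₗ, RCLike.conj_to_real]
  exact hh.comp_hasFDerivAt x hf.hasFDerivAt

theorem hasGradientAt_inner_right (a x : F) : HasGradientAt (fun y => ⟪a, y⟫) a x :=
  (innerSL ℝ a).hasFDerivAt

theorem hasGradientAt_half_inner_self (x : F) :
    HasGradientAt (fun y => 1 / 2 * ⟪y, y⟫) x x := by
  have h := (hasStrictFDerivAt_norm_sq x).hasFDerivAt.const_mul (1 / 2 : ℝ)
  simp only [← real_inner_self_eq_norm_sq] at h
  refine (hasGradientAt_iff_hasFDerivAt).2 (h.congr_fderiv ?_)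
  ext y
  simp

end GradientCalculus

variable [Fintype ι]

noncomputable def softmax (v : ι → ℝ) (i : ι) : ℝ :=
  exp (v i) / ∑ j, exp (v j)

theorem HasGradientAt.log_sum_exp [Nonempty ι] {f : ι → F → ℝ} {f' : ι → F} {x : F}
    (hf : ∀ i, HasGradientAt (f i) (f' i) x) :
    HasGradientAt (fun y => log (∑ i, exp (f i y))) (∑ i, softmax (f · x) i • f' i) x := by
  have hpos : 0 < ∑ i, exp (f i x) := Finset.sum_pos (fun i _ => exp_pos _) Finset.univ_nonempty
  have hsum := HasGradientAt.fun_sum (u := Finset.univ) fun i _ =>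
    (hasDerivAt_exp (f i x)).comp_hasGradientAt (hf i)
  convert (hasDerivAt_log hpos.ne').comp_hasGradientAt (f := fun y => ∑ i, exp (f i y)) hsum
    using 1
  simp only [softmax, Finset.smul_sum, smul_smul, div_eq_inv_mul]

noncomputable def hopfieldEnergy (β c : ℝ) (x : ι → F) (ξ : F) : ℝ :=
  1 / 2 * ⟪ξ, ξ⟫ - β⁻¹ * log (∑ i, exp (β * ⟪x i, ξ⟫)) + c

theorem hasGradientAt_hopfieldEnergy [Nonempty ι] {β : ℝ} (hβ : β ≠ 0) (c : ℝ) (x : ι → F)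
    (ξ : F) :
    HasGradientAt (hopfieldEnergy β c x) (ξ - ∑ i, softmax (β * ⟪x ·, ξ⟫) i • x i) ξ := by
  have h : HasGradientAt (hopfieldEnergy β c x) _ ξ := ((hasGradientAt_half_inner_self ξ).sub
    ((HasGradientAt.log_sum_exp fun i => (hasGradientAt_inner_right (x i) ξ).const_mul β).const_mul
      β⁻¹)).add_const c
  convert h using 2
  simp only [Finset.smul_sum, smul_comm β⁻¹ (softmax _ _), inv_smul_smul₀ hβ]

/-- The Hopfield energy `E(ξ) = ½·⟨ξ,ξ⟩ − β⁻¹·log(∑ᵢ exp(β·⟨xᵢ,ξ⟩)) + c` is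
differentiable, its gradient is `∇E(ξ) = ξ − ∑ᵢ softmax(β·Xᵀξ)ᵢ • xᵢ`, and hence
one gradient-descent step with step size 1 gives the Hopfield update rule
`ξ − ∇E(ξ) = ∑ᵢ softmax(β·Xᵀξ)ᵢ • xᵢ`. -/
theorem hopfield_energy_gradient_and_update
    (N d : ℕ) (hN : 1 ≤ N) (β : ℝ) (hβ : 0 < β) (c : ℝ)
    (x : Fin N → EuclideanSpace ℝ (Fin d))
    (E : EuclideanSpace ℝ (Fin d) → ℝ)
    (hE : E = fun ξ =>
      (1 / 2) * ⟪ξ, ξ⟫ - β⁻¹ * Real.log (∑ i, Real.exp (β * ⟪x i, ξ⟫)) + c) :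
    Differentiable ℝ E ∧
      (∀ ξ : EuclideanSpace ℝ (Fin d),
        gradient E ξ =
          ξ - ∑ i, (Real.exp (β * ⟪x i, ξ⟫) /
            ∑ m, Real.exp (β * ⟪x m, ξ⟫)) • x i) ∧
      (∀ ξ : EuclideanSpace ℝ (Fin d),
        ξ - gradient E ξ =
          ∑ i, (Real.exp (β * ⟪x i, ξ⟫) /
            ∑ m, Real.exp (β * ⟪x m, ξ⟫)) • x i) := by
  have : Nonempty (Fin N) := ⟨⟨0, hN⟩⟩
  have hgrad : ∀ ξ, HasGradientAt E (ξ - ∑ i, softmax (β * ⟪x ·, ξ⟫) i • x i) ξ := by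
    subst hE
    exact hasGradientAt_hopfieldEnergy hβ.ne' c x
  refine ⟨fun ξ => (hgrad ξ).differentiableAt, fun ξ => (hgrad ξ).gradient, fun ξ => ?_⟩
  rw [(hgrad ξ).gradient, sub_sub_cancel]
  rfl
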